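/- arXiv:2402.16816 — 6 statements merged into one kernel-verified Lean document; each statement's English description precedes it below -/
import Mathlib

section
/- Let a_1, ..., a_n be a sequence of non-negative integers with M = a_1 + ... + a_n, and let a and r be the integers determined by M = a·n + r with 0 ≤ r < n. Then ∑_{i=1}^n C(a_i, 2) ≥ r·C(a+1, 2) + (n − r)·C(a, 2), where C(m,2) = m(m−1)/2 denotes the binomial coefficient. -/
/-- Integer version of the Cauchy–Schwarz inequality: if `M = ∑ aᵢ = a * n + r`
with `0 ≤ r < n`, then `∑ C(aᵢ, 2) ≥ r * C(a+1, 2) + (n - r) * C(a, 2)`. -/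
theorem sum_choose_two_lower_bound (n : ℕ) (hn : 0 < n) (f : Fin n → ℕ) (M a r : ℕ)
    (hM : M = ∑ i, f i) (har : M = a * n + r) (hr : r < n) :
    r * (a + 1).choose 2 + (n - r) * a.choose 2 ≤ ∑ i, (f i).choose 2 := by
  have key : ∀ x : ℕ, (a : ℚ) * ((a : ℚ) - 1) / 2 + (a : ℚ) * ((x : ℚ) - (a : ℚ))
      ≤ (x : ℚ) * ((x : ℚ) - 1) / 2 := by
    intro x
    have hd : (0 : ℤ) ≤ ((x : ℤ) - a) * ((x : ℤ) - a - 1) := by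
      rcases le_or_gt 1 ((x : ℤ) - a) with h | h
      · nlinarith
      · nlinarith
    have hq : (0 : ℚ) ≤ ((x : ℚ) - a) * ((x : ℚ) - a - 1) := by
      exact_mod_cast hd
    nlinarith [hq]
  have hsum : ∑ i, ((a : ℚ) * ((a : ℚ) - 1) / 2 + (a : ℚ) * ((f i : ℚ) - (a : ℚ)))
      ≤ ∑ i, ((f i : ℚ) * ((f i : ℚ) - 1) / 2) :=
    Finset.sum_le_sum fun i _ => key (f i)
  have hMn : (M : ℚ) = ∑ i, (f i : ℚ) := by rw [hM]; push_cast; ring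
  have hsumf : ∑ i, ((a : ℚ) * ((a : ℚ) - 1) / 2 + (a : ℚ) * ((f i : ℚ) - (a : ℚ)))
      = (n : ℚ) * ((a : ℚ) * ((a : ℚ) - 1) / 2) + (a : ℚ) * ((M : ℚ) - (n : ℚ) * a) := by
    rw [Finset.sum_add_distrib, Finset.sum_const, Finset.card_univ, Fintype.card_fin, hMn,
      ← Finset.mul_sum, Finset.sum_sub_distrib, Finset.sum_const, Finset.card_univ,
      Fintype.card_fin]
    push_cast
    ring
  have hMq : (M : ℚ) = (a : ℚ) * n + r := by exact_mod_cast har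
  have hgoal : ((r : ℚ) * ((a + 1).choose 2 : ℚ) + ((n - r : ℕ) : ℚ) * ((a.choose 2 : ℕ) : ℚ))
      ≤ ∑ i, ((f i).choose 2 : ℚ) := by
    have h1 : (((a : ℕ) + 1).choose 2 : ℚ) = ((a : ℚ) + 1) * (a : ℚ) / 2 := by
      rw [Nat.cast_choose_two]; push_cast; ring
    have h2 : ((a.choose 2 : ℕ) : ℚ) = (a : ℚ) * ((a : ℚ) - 1) / 2 := Nat.cast_choose_two (K := ℚ) a
    have h3 : ∀ i, ((f i).choose 2 : ℚ) = (f i : ℚ) * ((f i : ℚ) - 1) / 2 :=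
      fun i => Nat.cast_choose_two (K := ℚ) (f i)
    have hnr : ((n - r : ℕ) : ℚ) = (n : ℚ) - (r : ℚ) := by
      rw [Nat.cast_sub hr.le]
    rw [h1, h2, hnr]
    calc (r : ℚ) * (((a : ℚ) + 1) * (a : ℚ) / 2) + ((n : ℚ) - r) * ((a : ℚ) * ((a : ℚ) - 1) / 2)
        = (n : ℚ) * ((a : ℚ) * ((a : ℚ) - 1) / 2) + (a : ℚ) * ((M : ℚ) - (n : ℚ) * a) := by
          rw [hMq]; ring
      _ ≤ ∑ i, ((f i : ℚ) * ((f i : ℚ) - 1) / 2) := by rw [← hsumf]; exact hsum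
      _ = ∑ i, ((f i).choose 2 : ℚ) := by
          exact Finset.sum_congr rfl fun i _ => (h3 i).symm
  exact_mod_cast hgoal
end

section
/- Let a_1, ..., a_n be a sequence of non-negative integers with M = a_1 + ... + a_n, and let a and r be the integers determined by M = a·n + r with 0 ≤ r < n. Then ∑_{i=1}^n C(a_i, 2) = r·C(a+1, 2) + (n − r)·C(a, 2) if and only if |a_i − a_j| ≤ 1 for every 1 ≤ i < j ≤ n. -/
lemma two_choose_two (x : ℕ) : 2 * x.choose 2 + x = x * x := by
  induction x with
  | zero => rfl
  | succ k ih =>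
    have h2 : (k + 1).choose 2 = k.choose 1 + k.choose 2 := Nat.choose_succ_succ k 1
    rw [Nat.choose_one_right] at h2
    have h : (k + 1) * (k + 1) = k * k + 2 * k + 1 := by ring
    omega

/-- Equality case of the integer Cauchy–Schwarz inequality: if `M = ∑ aᵢ = a * n + r`
with `0 ≤ r < n`, then `∑ C(aᵢ, 2) = r * C(a+1, 2) + (n - r) * C(a, 2)` holds
if and only if `|aᵢ - aⱼ| ≤ 1` for all `1 ≤ i < j ≤ n`. -/
theorem sum_choose_two_eq_iff (n : ℕ) (hn : 0 < n) (f : Fin n → ℕ) (M a r : ℕ)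
    (hM : M = ∑ i, f i) (har : M = a * n + r) (hr : r < n) :
    (∑ i, (f i).choose 2 = r * (a + 1).choose 2 + (n - r) * a.choose 2) ↔
      ∀ i j : Fin n, i < j → |(f i : ℤ) - (f j : ℤ)| ≤ 1 := by
  -- cast facts
  have hMcast : (∑ i, ((f i : ℤ))) = (a : ℤ) * n + r := by
    have : (∑ i, f i) = a * n + r := by omega
    exact_mod_cast this
  have h1 : (∑ i, ((f i : ℤ) * (f i) - (f i))) = 2 * ∑ i, ((f i).choose 2 : ℤ) := by
    rw [Finset.mul_sum]
    refine Finset.sum_congr rfl fun i _ => ?_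
    have := two_choose_two (f i)
    have h2 : (2 : ℤ) * ((f i).choose 2 : ℤ) + (f i : ℤ) = (f i : ℤ) * (f i : ℤ) := by
      exact_mod_cast this
    linarith
  have h3 : (2 : ℤ) * ((a + 1).choose 2 : ℤ) = ((a : ℤ) + 1) * a := by
    have := two_choose_two (a + 1)
    have h : (2 : ℤ) * ((a + 1).choose 2 : ℤ) + ((a : ℤ) + 1) = ((a : ℤ) + 1) * ((a : ℤ) + 1) := by
      exact_mod_cast this
    linarith
  have h4 : (2 : ℤ) * (a.choose 2 : ℤ) = (a : ℤ) * a - a := by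
    have := two_choose_two a
    have h : (2 : ℤ) * (a.choose 2 : ℤ) + (a : ℤ) = (a : ℤ) * (a : ℤ) := by
      exact_mod_cast this
    linarith
  -- central identity
  have central : (∑ i, ((f i : ℤ) - a) * ((f i : ℤ) - a - 1))
      = 2 * (∑ i, ((f i).choose 2 : ℤ))
        - 2 * ((r : ℤ) * ((a + 1).choose 2 : ℤ) + ((n : ℤ) - r) * (a.choose 2 : ℤ)) := by
    have expand : ∀ i ∈ Finset.univ, ((f i : ℤ) - a) * ((f i : ℤ) - a - 1)
        = (((f i : ℤ) * (f i) - (f i)) - 2 * (a : ℤ) * (f i)) + ((a : ℤ) * a + a) :=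
      fun i _ => by ring
    rw [Finset.sum_congr rfl expand, Finset.sum_add_distrib, Finset.sum_sub_distrib,
      ← Finset.mul_sum, Finset.sum_const, Finset.card_univ, Fintype.card_fin, nsmul_eq_mul]
    linear_combination h1 - 2 * (a : ℤ) * hMcast + (r : ℤ) * h3 + ((n : ℤ) - (r : ℤ)) * h4
  -- the equality is equivalent to the sum of nonneg terms being zero
  have keyiff : (∑ i, (f i).choose 2 = r * (a + 1).choose 2 + (n - r) * a.choose 2)
      ↔ (∑ i, ((f i : ℤ) - a) * ((f i : ℤ) - a - 1)) = 0 := by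
    rw [central]
    constructor
    · intro h
      have hz : ((∑ i, (f i).choose 2 : ℕ) : ℤ)
          = ((r * (a + 1).choose 2 + (n - r) * a.choose 2 : ℕ) : ℤ) := by exact_mod_cast h
      push_cast [Nat.cast_sub hr.le] at hz
      rw [hz]; ring
    · intro h
      have hz : ((∑ i, (f i).choose 2 : ℕ) : ℤ)
          = ((r * (a + 1).choose 2 + (n - r) * a.choose 2 : ℕ) : ℤ) := by
        push_cast [Nat.cast_sub hr.le]
        linarith
      exact_mod_cast hz
  have hnonneg : ∀ i ∈ Finset.univ, (0 : ℤ) ≤ ((f i : ℤ) - a) * ((f i : ℤ) - a - 1) := by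
    intro i _
    rcases le_or_gt ((f i : ℤ) - a) 0 with h | h
    · have h' : (f i : ℤ) - a - 1 ≤ 0 := by omega
      have h2 := mul_nonneg (neg_nonneg.mpr h) (neg_nonneg.mpr h')
      rw [neg_mul_neg] at h2
      exact h2
    · exact mul_nonneg (by omega) (by omega)
  have keyiff2 : (∑ i, (f i).choose 2 = r * (a + 1).choose 2 + (n - r) * a.choose 2)
      ↔ ∀ i : Fin n, f i = a ∨ f i = a + 1 := by
    rw [keyiff, Finset.sum_eq_zero_iff_of_nonneg hnonneg]
    constructor
    · intro h i
      have := h i (Finset.mem_univ i)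
      rcases mul_eq_zero.mp this with h' | h' <;> omega
    · intro h i _
      rcases h i with h' | h'
      · have : ((f i : ℤ) - a) = 0 := by omega
        rw [this]; ring
      · have : ((f i : ℤ) - a - 1) = 0 := by omega
        rw [this]; ring
  rw [keyiff2]
  constructor
  · intro h i j _
    rcases h i with h1 | h1 <;> rcases h j with h2 | h2 <;> rw [abs_le] <;> constructor <;> omega
  · intro hpair
    obtain ⟨i0, -, hmin⟩ := Finset.exists_min_image Finset.univ f ⟨⟨0, hn⟩, Finset.mem_univ _⟩
    set m := f i0 with hm
    have hlb : ∀ j, m ≤ f j := fun j => hmin j (Finset.mem_univ j)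
    have hub : ∀ j, f j ≤ m + 1 := by
      intro j
      rcases lt_trichotomy i0 j with h | h | h
      · have := hpair i0 j h
        rw [abs_le] at this
        omega
      · rw [← h]; omega
      · have := hpair j i0 h
        rw [abs_le] at this
        omega
    have hb1 : n * m ≤ M := by
      rw [hM]
      calc n * m = ∑ _i : Fin n, m := by
            rw [Finset.sum_const, Finset.card_univ, Fintype.card_fin, smul_eq_mul]
        _ ≤ ∑ i, f i := Finset.sum_le_sum fun i _ => hlb i
    have hb2 : M < n * (m + 1) := by
      rw [hM]
      calc ∑ i, f i < ∑ _i : Fin n, (m + 1) :=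
            Finset.sum_lt_sum (fun i _ => hub i) ⟨i0, Finset.mem_univ _, by omega⟩
        _ = n * (m + 1) := by
            rw [Finset.sum_const, Finset.card_univ, Fintype.card_fin, smul_eq_mul]
    have ham : a = m := by
      have hle : a ≤ m := by
        by_contra hc
        push_neg at hc
        have := Nat.mul_le_mul_left n hc
        nlinarith
      have hge : m ≤ a := by
        by_contra hc
        push_neg at hc
        have := Nat.mul_le_mul_left n hc
        nlinarith
      omega
    intro i
    have := hlb i
    have := hub i
    omega
end

section
/- Let p, k ≥ 2 and n ≥ 1 be integers. Set w = ⌈(2·⌈n²p(p−1)/(2k)⌉)/p⌉, and let a and r be the integers determined by w = a·(p−1)·n + r with 0 ≤ r < (p−1)n. If r·C(a+1,2) + ((p−1)n − r)·C(a,2) > C(n,2), then every coloring of the edges of the complete p-partite graph K_n^p (p parts, each of size n) with k colors contains a monochromatic cycle C_4; equivalently, r_p(C_4,k) ≤ n. -/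
/-!
Suppose a `k`-colouring of `K_n^p` has no monochromatic `C₄`. Some colour class has at least
`⌈n²p(p-1)/(2k)⌉` edges; as every edge meets two parts, some part `V_j` is met at least
`w = ⌈2⌈n²p(p-1)/(2k)⌉/p⌉` times by edges of that colour. The `(p-1)n` vertices outside `V_j`
thus have colour-class degrees `d_v` into `V_j` summing to at least `w = a(p-1)n + r`, so by
convexity `∑ C(d_v, 2) ≥ r·C(a+1,2) + ((p-1)n - r)·C(a,2)`. On the other hand two of these
vertices with two common neighbours in `V_j` span a monochromatic `C₄`, so every pair in `V_j`
is counted at most once and `∑ C(d_v, 2) ≤ C(n,2)`.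
-/

/-- The complete multipartite graph with `p` parts, each of size `n`:
vertices are pairs `(part, index)`, adjacent iff they lie in different parts. -/
def completeMultipartite (p n : ℕ) : SimpleGraph (Fin p × Fin n) where
  Adj v w := v.1 ≠ w.1
  symm := ⟨fun _ _ h => h.symm⟩
  loopless := ⟨fun _ h => h rfl⟩

instance (p n : ℕ) : DecidableRel (completeMultipartite p n).Adj :=
  fun v w => inferInstanceAs (Decidable (v.1 ≠ w.1))

/-- The edge coloring `c` contains a monochromatic cycle `C₄` in the graph `G`. -/
def HasMonoC4 {V : Type*} (G : SimpleGraph V) {k : ℕ} (c : Sym2 V → Fin k) : Prop :=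
  ∃ v₁ v₂ v₃ v₄ : V,
    v₁ ≠ v₂ ∧ v₁ ≠ v₃ ∧ v₁ ≠ v₄ ∧ v₂ ≠ v₃ ∧ v₂ ≠ v₄ ∧ v₃ ≠ v₄ ∧
    G.Adj v₁ v₂ ∧ G.Adj v₂ v₃ ∧ G.Adj v₃ v₄ ∧ G.Adj v₄ v₁ ∧
    c s(v₁, v₂) = c s(v₂, v₃) ∧ c s(v₂, v₃) = c s(v₃, v₄) ∧ c s(v₃, v₄) = c s(v₄, v₁)

/-- The `p`-partite Ramsey number `r_p(C₄, k)`: the least positive `n` such that every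
`k`-coloring of the edges of `K_n^p` contains a monochromatic `C₄`. -/
noncomputable def multipartiteRamsey (p k : ℕ) : ℕ :=
  sInf {n : ℕ | 0 < n ∧
    ∀ c : Sym2 (Fin p × Fin n) → Fin k, HasMonoC4 (completeMultipartite p n) c}

open Finset

theorem sum_choose_two_card_le_choose_two {α β : Type*} [DecidableEq β] (S : Finset α)
    (B : Finset β) (N : α → Finset β) (hNB : ∀ v ∈ S, N v ⊆ B)
    (hN : ∀ v ∈ S, ∀ w ∈ S, v ≠ w → #(N v ∩ N w) ≤ 1) :
    ∑ v ∈ S, (#(N v)).choose 2 ≤ (#B).choose 2 := by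
  have hdisj : (S : Set α).PairwiseDisjoint fun v => powersetCard 2 (N v) := by
    intro v hv w hw hvw
    refine disjoint_left.2 fun P hPv hPw => ?_
    rw [mem_powersetCard] at hPv hPw
    have := card_le_card (subset_inter hPv.1 hPw.1)
    have := hN v hv w hw hvw
    omega
  calc ∑ v ∈ S, (#(N v)).choose 2 = #(S.biUnion fun v => powersetCard 2 (N v)) := by
        simp only [card_biUnion hdisj, card_powersetCard]
    _ ≤ #(powersetCard 2 B) :=
        card_le_card (biUnion_subset.2 fun v hv => powersetCard_mono (hNB v hv))
    _ = (#B).choose 2 := card_powersetCard 2 B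

-- `x ↦ C(x, 2)` lies above the line of slope `a` through its values at `a` and `a + 1`.
theorem choose_two_add_mul_le (a d : ℕ) : a.choose 2 + a * d ≤ d.choose 2 + a * a := by
  have hcases : (d : ℚ) ≤ a ∨ (a : ℚ) + 1 ≤ d := by
    rcases le_or_gt d a with h | h
    · exact .inl (by exact_mod_cast h)
    · exact .inr (by exact_mod_cast h)
  suffices ((a.choose 2 + a * d : ℕ) : ℚ) ≤ ((d.choose 2 + a * a : ℕ) : ℚ) by exact_mod_cast this
  push_cast [Nat.cast_choose_two]
  rcases hcases with h | h <;> nlinarith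

theorem le_sum_choose_two {ι : Type*} (S : Finset ι) (d : ι → ℕ) {a r : ℕ} (hr : r ≤ #S)
    (hd : a * #S + r ≤ ∑ v ∈ S, d v) :
    r * (a + 1).choose 2 + (#S - r) * a.choose 2 ≤ ∑ v ∈ S, (d v).choose 2 := by
  have htangent :
      #S * a.choose 2 + a * ∑ v ∈ S, d v ≤ ∑ v ∈ S, (d v).choose 2 + #S * (a * a) := by
    simpa [sum_add_distrib, mul_sum] using sum_le_sum fun v _ => choose_two_add_mul_le a (d v)
  have hsucc : (a + 1).choose 2 = a.choose 2 + a := by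
    rw [Nat.choose_succ_succ', Nat.choose_one_right, add_comm]
  obtain ⟨s, hs⟩ := Nat.exists_eq_add_of_le hr
  rw [hs] at htangent hd ⊢
  rw [hsucc, Nat.add_sub_cancel_left]
  nlinarith [Nat.mul_le_mul_left a hd]

theorem exists_ceil_div_le {ι : Type*} [Fintype ι] [Nonempty ι] (f : ι → ℕ) {N : ℕ}
    (hN : N ≤ ∑ i, f i) : ∃ i, ⌈(N : ℚ) / Fintype.card ι⌉₊ ≤ f i := by
  obtain ⟨i, -, hi⟩ := exists_le_of_sum_le (univ_nonempty (α := ι))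
    (f := fun _ => (N : ℚ) / Fintype.card ι) (g := fun i => (f i : ℚ)) (by
      rw [sum_const, card_univ, nsmul_eq_mul, mul_div_cancel₀ _ (by simp)]
      exact_mod_cast hN)
  exact ⟨i, Nat.ceil_le.2 hi⟩

section ColorClass

variable {V : Type*} (G : SimpleGraph V) {k : ℕ} (c : Sym2 V → Fin k)

def colorClass (i : Fin k) : SimpleGraph V where
  Adj v w := G.Adj v w ∧ c s(v, w) = i
  symm := ⟨fun _ _ h => ⟨h.1.symm, Sym2.eq_swap (a := _) ▸ h.2⟩⟩
  loopless := ⟨fun v h => G.loopless.irrefl v h.1⟩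

instance [DecidableRel G.Adj] (i : Fin k) : DecidableRel (colorClass G c i).Adj :=
  fun _ _ => inferInstanceAs (Decidable (_ ∧ _))

theorem colorClass_le (i : Fin k) : colorClass G c i ≤ G := fun _ _ h => h.1

theorem edgeFinset_colorClass [Fintype V] [DecidableEq V] [DecidableRel G.Adj] (i : Fin k) :
    (colorClass G c i).edgeFinset = {e ∈ G.edgeFinset | c e = i} := by
  ext e
  induction e using Sym2.ind
  simp only [mem_filter, SimpleGraph.mem_edgeFinset, SimpleGraph.mem_edgeSet]
  rfl

theorem sum_card_edgeFinset_colorClass [Fintype V] [DecidableEq V] [DecidableRel G.Adj] :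
    ∑ i, #(colorClass G c i).edgeFinset = #G.edgeFinset := by
  simp only [edgeFinset_colorClass]
  exact (card_eq_sum_card_fiberwise fun _ _ => mem_univ _).symm

variable {G c}

theorem HasMonoC4.of_colorClass {i : Fin k} {v x w y : V} (hvw : v ≠ w) (hxy : x ≠ y)
    (hvx : (colorClass G c i).Adj v x) (hxw : (colorClass G c i).Adj x w)
    (hwy : (colorClass G c i).Adj w y) (hyv : (colorClass G c i).Adj y v) :
    HasMonoC4 G c :=
  ⟨v, x, w, y, hvx.ne, hvw, hyv.ne.symm, hxw.ne, hxy, hwy.ne, hvx.1, hxw.1, hwy.1, hyv.1,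
    hvx.2.trans hxw.2.symm, hxw.2.trans hwy.2.symm, hwy.2.trans hyv.2.symm⟩

end ColorClass

section Multipartite

variable {p n : ℕ}

def neighborsInPart (H : SimpleGraph (Fin p × Fin n)) [DecidableRel H.Adj] (j : Fin p)
    (v : Fin p × Fin n) : Finset (Fin n) :=
  {u | H.Adj v (j, u)}

theorem sum_card_neighborsInPart (H : SimpleGraph (Fin p × Fin n)) [DecidableRel H.Adj]
    (v : Fin p × Fin n) : ∑ j, #(neighborsInPart H j v) = H.degree v := by
  rw [← SimpleGraph.card_neighborFinset_eq_degree, SimpleGraph.neighborFinset_eq_filter,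
    card_filter, Fintype.sum_prod_type]
  exact sum_congr rfl fun j _ => card_filter _ _

theorem card_compl_part (j : Fin p) : #{v : Fin p × Fin n | v.1 ≠ j} = (p - 1) * n := by
  rw [show ({v : Fin p × Fin n | v.1 ≠ j} : Finset _) = (univ.erase j) ×ˢ univ by ext; simp,
    card_product, card_erase_of_mem (mem_univ j)]
  simp

theorem sum_sum_card_neighborsInPart {H : SimpleGraph (Fin p × Fin n)} [DecidableRel H.Adj]
    (hH : H ≤ completeMultipartite p n) :
    ∑ j, ∑ v ∈ {v : Fin p × Fin n | v.1 ≠ j}, #(neighborsInPart H j v) = 2 * #H.edgeFinset := by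
  have hpart : ∀ j v, v.1 = j → neighborsInPart H j v = ∅ := by
    rintro j v rfl
    exact filter_false_of_mem fun u _ h => hH h rfl
  calc ∑ j, ∑ v ∈ {v : Fin p × Fin n | v.1 ≠ j}, #(neighborsInPart H j v)
      = ∑ j, ∑ v, #(neighborsInPart H j v) := by
        refine sum_congr rfl fun j _ => sum_subset (subset_univ _) fun v _ hv => ?_
        rw [hpart j v (by simpa using hv), card_empty]
    _ = ∑ v, H.degree v := by
        rw [sum_comm]
        simp only [sum_card_neighborsInPart]
    _ = 2 * #H.edgeFinset := H.sum_degrees_eq_twice_card_edges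

theorem degree_completeMultipartite (v : Fin p × Fin n) :
    (completeMultipartite p n).degree v = (p - 1) * n := by
  rw [← SimpleGraph.card_neighborFinset_eq_degree, SimpleGraph.neighborFinset_eq_filter,
    ← card_compl_part v.1]
  congr 1
  ext w
  rw [mem_filter, mem_filter]
  exact and_congr_right fun _ => ne_comm

theorem two_mul_card_edgeFinset_completeMultipartite :
    2 * #(completeMultipartite p n).edgeFinset = n ^ 2 * p * (p - 1) := by
  rw [← SimpleGraph.sum_degrees_eq_twice_card_edges]
  simp only [degree_completeMultipartite, sum_const, card_univ, Fintype.card_prod,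
    Fintype.card_fin, smul_eq_mul]
  ring

theorem card_neighborsInPart_inter_le_one {k : ℕ} {G : SimpleGraph (Fin p × Fin n)}
    [DecidableRel G.Adj] {c : Sym2 (Fin p × Fin n) → Fin k} (hc : ¬HasMonoC4 G c) (i : Fin k)
    (j : Fin p) {v w : Fin p × Fin n} (hvw : v ≠ w) :
    #(neighborsInPart (colorClass G c i) j v ∩ neighborsInPart (colorClass G c i) j w) ≤ 1 := by
  refine card_le_one.2 fun u₁ hu₁ u₂ hu₂ => by_contra fun hu => hc ?_
  simp only [neighborsInPart, mem_inter, mem_filter, mem_univ, true_and] at hu₁ hu₂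
  exact .of_colorClass hvw (fun h => hu (congrArg Prod.snd h)) hu₁.1 hu₁.2.symm hu₂.2 hu₂.1.symm

theorem sum_choose_two_card_neighborsInPart_le {k : ℕ} {G : SimpleGraph (Fin p × Fin n)}
    [DecidableRel G.Adj] {c : Sym2 (Fin p × Fin n) → Fin k} (hc : ¬HasMonoC4 G c) (i : Fin k)
    (j : Fin p) (S : Finset (Fin p × Fin n)) :
    ∑ v ∈ S, (#(neighborsInPart (colorClass G c i) j v)).choose 2 ≤ n.choose 2 := by
  simpa using sum_choose_two_card_le_choose_two S univ _ (fun _ _ => subset_univ _)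
    fun v _ w _ hvw => card_neighborsInPart_inter_le_one hc i j hvw

theorem exists_ceil_le_sum_card_neighborsInPart {k : ℕ} (hp : 0 < p) (hk : 0 < k)
    (c : Sym2 (Fin p × Fin n) → Fin k) :
    ∃ i j, ⌈(2 * (⌈((n : ℚ) ^ 2 * p * ((p : ℚ) - 1)) / (2 * k)⌉₊ : ℚ)) / (p : ℚ)⌉₊ ≤
      ∑ v ∈ {v : Fin p × Fin n | v.1 ≠ j},
        #(neighborsInPart (colorClass (completeMultipartite p n) c i) j v) := by
  have : NeZero p := ⟨hp.ne'⟩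
  have : NeZero k := ⟨hk.ne'⟩
  obtain ⟨i, hi⟩ :=
    exists_ceil_div_le _ (sum_card_edgeFinset_colorClass (completeMultipartite p n) c).ge
  have hedges : ((n : ℚ) ^ 2 * p * ((p : ℚ) - 1)) / (2 * k) =
      (#(completeMultipartite p n).edgeFinset : ℚ) / Fintype.card (Fin k) := by
    have hcast :
        2 * (#(completeMultipartite p n).edgeFinset : ℚ) = n ^ 2 * p * ((p : ℚ) - 1) := by
      rw [← Nat.cast_pred hp]
      exact_mod_cast two_mul_card_edgeFinset_completeMultipartite
    rw [Fintype.card_fin, ← hcast, mul_div_mul_left _ _ two_ne_zero]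
  obtain ⟨j, hj⟩ := exists_ceil_div_le _ (N := 2 * ⌈((n : ℚ) ^ 2 * p * ((p : ℚ) - 1)) / (2 * k)⌉₊)
    (by
      rw [sum_sum_card_neighborsInPart (colorClass_le (completeMultipartite p n) c i), hedges]
      omega)
  exact ⟨i, j, by simpa using hj⟩

end Multipartite

theorem multipartiteRamsey_le_of_ineq_general (p k n : ℕ) (w a r : ℕ)
    (hw : w = ⌈(2 * (⌈((n : ℚ) ^ 2 * p * ((p : ℚ) - 1)) / (2 * k)⌉₊ : ℚ)) / (p : ℚ)⌉₊)
    (har : w = a * ((p - 1) * n) + r) (hr : r < (p - 1) * n)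
    (hineq : n.choose 2 < r * (a + 1).choose 2 + ((p - 1) * n - r) * a.choose 2) :
    (∀ c : Sym2 (Fin p × Fin n) → Fin k, HasMonoC4 (completeMultipartite p n) c) ∧
      multipartiteRamsey p k ≤ n := by
  have hpn : 0 < p - 1 ∧ 0 < n := CanonicallyOrderedAdd.mul_pos.1 (by omega)
  have key : ∀ c : Sym2 (Fin p × Fin n) → Fin k, HasMonoC4 (completeMultipartite p n) c := by
    intro c
    by_contra hc
    have hk : 0 < k := (c s((⟨0, by omega⟩, ⟨0, hpn.2⟩), (⟨0, by omega⟩, ⟨0, hpn.2⟩))).pos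
    obtain ⟨i, j, hij⟩ := exists_ceil_le_sum_card_neighborsInPart (by omega) hk c
    have hS := card_compl_part (n := n) j
    have hlower := le_sum_choose_two {v : Fin p × Fin n | v.1 ≠ j} _ (a := a) (r := r) (by omega)
      (by rw [hS, ← har, hw]; exact hij)
    have hupper := sum_choose_two_card_neighborsInPart_le hc i j {v | v.1 ≠ j}
    rw [hS] at hlower
    omega
  exact ⟨key, Nat.sInf_le ⟨hpn.2, key⟩⟩

/-- If `w = ⌈2⌈n²p(p-1)/(2k)⌉/p⌉ = a(p-1)n + r` with `0 ≤ r < (p-1)n` and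
`r·C(a+1,2) + ((p-1)n - r)·C(a,2) > C(n,2)`, then every `k`-coloring of the edges of
`K_n^p` contains a monochromatic `C₄`; equivalently `r_p(C₄,k) ≤ n`. -/
theorem multipartiteRamsey_le_of_ineq (p k n : ℕ) (hp : 2 ≤ p) (hk : 2 ≤ k) (hn : 1 ≤ n)
    (w a r : ℕ)
    (hw : w = ⌈(2 * (⌈((n : ℚ) ^ 2 * p * ((p : ℚ) - 1)) / (2 * k)⌉₊ : ℚ)) / (p : ℚ)⌉₊)
    (har : w = a * ((p - 1) * n) + r) (hr : r < (p - 1) * n)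
    (hineq : n.choose 2 < r * (a + 1).choose 2 + ((p - 1) * n - r) * a.choose 2) :
    (∀ c : Sym2 (Fin p × Fin n) → Fin k, HasMonoC4 (completeMultipartite p n) c) ∧
      multipartiteRamsey p k ≤ n :=
  multipartiteRamsey_le_of_ineq_general p k n w a r hw har hr hineq
end

section
/- r_5(C_4, 2) = 2; that is, every 2-coloring of the edges of the complete 5-partite graph with all five parts of size 2 contains a monochromatic C_4, while there exists a 2-coloring of the edges of the complete graph K_5 with no monochromatic C_4. -/
/-!
Count monochromatic cherries, i.e. pairs of distinct edges `vu`, `vw` of the same color. By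
Cauchy–Schwarz a vertex of degree `d` is the center of at least `d²/k - d` ordered cherries. If
there is no monochromatic `C₄`, two cherries with the same ordered leaves and the same color have
the same center, so there are at most `k n (n - 1)` of them. For `K_2^5` (`n = 10`, `d = 8`,
`k = 2`) this reads `240 ≤ 180`. On `K_5`, coloring a pentagon and its complement, the pentagram,
differently leaves no monochromatic `C₄`.
-/

open Finset SimpleGraph

/-- `⟨v, i, (u, w)⟩` encodes the monochromatic cherry with center `v`, color `i` and ordered
pair of distinct leaves `u`, `w`. -/
def monoCherries {V : Type*} [Fintype V] [DecidableEq V] (G : SimpleGraph V) [DecidableRel G.Adj]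
    {k : ℕ} (c : Sym2 V → Fin k) : Finset (Σ _ : V, Σ _ : Fin k, V × V) :=
  univ.sigma fun v => univ.sigma fun i => {u ∈ G.neighborFinset v | c s(v, u) = i}.offDiag

theorem sq_card_le_card_mul_sum_card_offDiag_fiber {α β : Type*} [DecidableEq α] [Fintype β]
    [DecidableEq β] (s : Finset α) (f : α → β) :
    #s ^ 2 ≤ Fintype.card β * (∑ b, #{a ∈ s | f a = b}.offDiag + #s) := by
  have hsum : #s = ∑ b, #{a ∈ s | f a = b} :=
    card_eq_sum_card_fiberwise fun a _ => mem_univ (f a)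
  have hdiag : ∀ t : Finset α, #t.offDiag + #t = #t ^ 2 := fun t => by
    rw [offDiag_card, sq]; exact Nat.sub_add_cancel (Nat.le_mul_self _)
  calc #s ^ 2 = (∑ b, #{a ∈ s | f a = b}) ^ 2 := by rw [← hsum]
    _ ≤ Fintype.card β * ∑ b, #{a ∈ s | f a = b} ^ 2 := sq_sum_le_card_mul_sum_sq
    _ = Fintype.card β * (∑ b, #{a ∈ s | f a = b}.offDiag + #s) := by
      simp only [← hdiag, sum_add_distrib, ← hsum]

section Cherries

variable {V : Type*} (G : SimpleGraph V) {k : ℕ} (c : Sym2 V → Fin k)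

theorem hasMonoC4_of_common_neighbors {v v' u w : V} {i : Fin k} (hv : v ≠ v') (hu : u ≠ w)
    (hvu : G.Adj v u) (hvw : G.Adj v w) (hv'u : G.Adj v' u) (hv'w : G.Adj v' w)
    (cvu : c s(v, u) = i) (cvw : c s(v, w) = i) (cv'u : c s(v', u) = i) (cv'w : c s(v', w) = i) :
    HasMonoC4 G c :=
  ⟨v, u, v', w, hvu.ne, hv, hvw.ne, hv'u.ne.symm, hu, hv'w.ne, hvu, hv'u.symm, hv'w, hvw.symm,
    by rw [Sym2.eq_swap (a := u), cvu, cv'u], by rw [Sym2.eq_swap (a := u), cv'u, cv'w],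
    by rw [Sym2.eq_swap (a := w), cv'w, cvw]⟩

variable [Fintype V] [DecidableEq V] [DecidableRel G.Adj]

theorem sq_degree_le_mul_sum_card_offDiag (v : V) :
    G.degree v ^ 2 ≤
      k * (∑ i, #{u ∈ G.neighborFinset v | c s(v, u) = i}.offDiag + G.degree v) := by
  simpa [← card_neighborFinset_eq_degree] using
    sq_card_le_card_mul_sum_card_offDiag_fiber (G.neighborFinset v) (fun u => c s(v, u))

theorem card_monoCherries_le (h : ¬ HasMonoC4 G c) :
    #(monoCherries G c) ≤ (Fintype.card V * Fintype.card V - Fintype.card V) * k := by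
  calc #(monoCherries G c) ≤ #((univ : Finset V).offDiag ×ˢ (univ : Finset (Fin k))) := by
        refine card_le_card_of_injOn (fun x => (x.2.2, x.2.1)) ?_ ?_
        · rintro ⟨v, i, u, w⟩ hx
          simp_all [monoCherries]
        · rintro ⟨v, i, u, w⟩ hx ⟨v', i', u', w'⟩ hx' heq
          simp only [monoCherries, coe_sigma, Set.mem_sigma_iff, coe_univ, Set.mem_univ,
            coe_offDiag, Set.mem_offDiag, coe_filter, mem_neighborFinset, true_and] at hx hx'
          obtain ⟨⟨rfl, rfl⟩, rfl⟩ : (u = u' ∧ w = w') ∧ i = i' := by simpa using heq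
          obtain ⟨⟨hvu, cvu⟩, ⟨hvw, cvw⟩, huw⟩ := hx
          obtain ⟨⟨hv'u, cv'u⟩, ⟨hv'w, cv'w⟩, -⟩ := hx'
          obtain rfl | hv := eq_or_ne v v'
          · rfl
          · exact (h <| hasMonoC4_of_common_neighbors G c hv huw hvu hvw hv'u hv'w
              cvu cvw cv'u cv'w).elim
    _ = _ := by rw [card_product, offDiag_card, card_univ, card_univ, Fintype.card_fin]

theorem card_monoCherries :
    #(monoCherries G c) = ∑ v, ∑ i, #{u ∈ G.neighborFinset v | c s(v, u) = i}.offDiag := by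
  simp only [monoCherries, card_sigma]

theorem hasMonoC4_of_isRegularOfDegree [Nonempty V] {d : ℕ} (hG : G.IsRegularOfDegree d)
    (hd : k * (k * (Fintype.card V - 1) + d) < d ^ 2) : HasMonoC4 G c := by
  by_contra h
  set n := Fintype.card V
  have hlower : n * d ^ 2 ≤ k * (#(monoCherries G c) + n * d) :=
    calc n * d ^ 2 = ∑ v, G.degree v ^ 2 := by simp [hG.degree_eq, n]
      _ ≤ ∑ v, k * (∑ i, #{u ∈ G.neighborFinset v | c s(v, u) = i}.offDiag + G.degree v) :=
        sum_le_sum fun v _ => sq_degree_le_mul_sum_card_offDiag G c v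
      _ = k * (#(monoCherries G c) + n * d) := by
        simp [← mul_sum, sum_add_distrib, card_monoCherries, hG.degree_eq, n]
  have hupper : n * d ^ 2 ≤ n * (k * (k * (n - 1) + d)) :=
    calc n * d ^ 2 ≤ k * ((n * n - n) * k + n * d) := by
          grw [← card_monoCherries_le G c h]; exact hlower
      _ = n * (k * (k * (n - 1) + d)) := by rw [← Nat.mul_sub_one]; ring
  exact (Nat.le_of_mul_le_mul_left hupper Fintype.card_pos).not_gt hd

end Cherries

theorem completeMultipartite_isRegularOfDegree (p n : ℕ) :
    (completeMultipartite p n).IsRegularOfDegree ((p - 1) * n) := by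
  intro v
  have hN : (completeMultipartite p n).neighborFinset v = (univ.erase v.1) ×ˢ univ := by
    ext w
    simp only [mem_neighborFinset, mem_product, mem_erase, mem_univ, and_true]
    exact ne_comm
  rw [← card_neighborFinset_eq_degree, hN, card_product, card_erase_of_mem (mem_univ _)]
  simp

theorem multipartiteRamsey_eq_two {p k : ℕ}
    (h2 : ∀ c : Sym2 (Fin p × Fin 2) → Fin k, HasMonoC4 (completeMultipartite p 2) c)
    (h1 : ∃ c : Sym2 (Fin p × Fin 1) → Fin k, ¬ HasMonoC4 (completeMultipartite p 1) c) :
    multipartiteRamsey p k = 2 := by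
  have hmem : 2 ∈ {n : ℕ | 0 < n ∧
      ∀ c : Sym2 (Fin p × Fin n) → Fin k, HasMonoC4 (completeMultipartite p n) c} :=
    ⟨two_pos, h2⟩
  refine le_antisymm (Nat.sInf_le hmem) (le_csInf ⟨2, hmem⟩ fun m ⟨hm, hall⟩ => ?_)
  obtain ⟨c, hc⟩ := h1
  by_contra hlt
  obtain rfl : m = 1 := by omega
  exact hc (hall c)

def pentagonColoring : Sym2 (Fin 5 × Fin 1) → Fin 2 :=
  Sym2.lift ⟨fun v w => if w.1 = v.1 + 1 ∨ v.1 = w.1 + 1 then 0 else 1,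
    fun v w => by simp only [or_comm]⟩

theorem not_hasMonoC4_pentagonColoring :
    ¬ HasMonoC4 (completeMultipartite 5 1) pentagonColoring := by
  unfold HasMonoC4
  decide

/-- `r₅(C₄, 2) = 2`: every 2-coloring of the edges of `K_2^5` contains a monochromatic
`C₄`, while there is a 2-coloring of the edges of `K_5 = K_1^5` with no monochromatic
`C₄`. -/
theorem multipartiteRamsey_five_two :
    multipartiteRamsey 5 2 = 2 ∧
    (∀ c : Sym2 (Fin 5 × Fin 2) → Fin 2, HasMonoC4 (completeMultipartite 5 2) c) ∧
    (∃ c : Sym2 (Fin 5 × Fin 1) → Fin 2, ¬ HasMonoC4 (completeMultipartite 5 1) c) := by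
  have hK : ∀ c : Sym2 (Fin 5 × Fin 2) → Fin 2, HasMonoC4 (completeMultipartite 5 2) c :=
    fun c => hasMonoC4_of_isRegularOfDegree _ c (completeMultipartite_isRegularOfDegree 5 2)
      (by simp)
  have hpent := not_hasMonoC4_pentagonColoring
  exact ⟨multipartiteRamsey_eq_two hK ⟨_, hpent⟩, hK, _, hpent⟩
end

section
/- Let the edges of the complete 4-partite graph K_2^4 (four parts, each of size 2) be colored with 2 colors. If some vertex x has degree at least 4 in one of the two colors, then the coloring contains a monochromatic cycle C_4. -/
/-- The degree of the vertex `x` in color `i` under the edge coloring `c` of `K_2^4`. -/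
def colorDegree (c : Sym2 (Fin 4 × Fin 2) → Fin 2) (x : Fin 4 × Fin 2) (i : Fin 2) : ℕ :=
  (Finset.univ.filter fun y => (completeMultipartite 4 2).Adj x y ∧ c s(x, y) = i).card


/-!
Let `N` be four neighbours of `x` joined to it in colour `i`, and suppose there is no
monochromatic `C₄`. Then two distinct vertices have at most one common neighbour in each
colour. Hence every vertex `w ≠ x` has at most one `i`-coloured edge into `N`, so at least
`d(w) - 1` edges of the other colour into `N`, where `d(w)` counts the neighbours of `w` in `N`;
and these sets of other-coloured neighbours pairwise share at most one vertex, so they cover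
pairwise different pairs of `N`. Thus `∑_{w ≠ x} C(d(w) - 1, 2) ≤ C(4, 2) = 6`, whereas in
`K_2^4` this sum is at least `7` for every choice of `N` (it is `9` if `N` is the union of two
parts and `7` otherwise).
-/

open Finset

section ColorNeighbors

variable {V : Type*} [Fintype V] (G : SimpleGraph V) [DecidableRel G.Adj] {k : ℕ}
  (c : Sym2 V → Fin k)

def colorNeighborFinset (v : V) (j : Fin k) : Finset V :=
  univ.filter fun y => G.Adj v y ∧ c s(v, y) = j

variable {G c}

theorem mem_colorNeighborFinset {v y : V} {j : Fin k} :
    y ∈ colorNeighborFinset G c v j ↔ G.Adj v y ∧ c s(v, y) = j := by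
  simp [colorNeighborFinset]

theorem hasMonoC4_of_mem_inter_colorNeighborFinset [DecidableEq V] {s t y z : V} {j : Fin k}
    (hst : s ≠ t) (hyz : y ≠ z)
    (hy : y ∈ colorNeighborFinset G c s j ∩ colorNeighborFinset G c t j)
    (hz : z ∈ colorNeighborFinset G c s j ∩ colorNeighborFinset G c t j) :
    HasMonoC4 G c := by
  simp only [mem_inter, mem_colorNeighborFinset] at hy hz
  obtain ⟨⟨hsy, csy⟩, hty, cty⟩ := hy
  obtain ⟨⟨hsz, csz⟩, htz, ctz⟩ := hz
  refine ⟨s, y, t, z, hsy.ne, hst, hsz.ne, hty.ne', hyz, htz.ne, hsy, hty.symm, htz, hsz.symm,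
    ?_, ?_, ?_⟩
  · rw [Sym2.eq_swap (a := y), csy, cty]
  · rw [Sym2.eq_swap (a := y), cty, ctz]
  · rw [Sym2.eq_swap (a := z), ctz, csz]

theorem card_inter_colorNeighborFinset_le_one [DecidableEq V] (hc : ¬HasMonoC4 G c) {s t : V}
    (hst : s ≠ t) (j : Fin k) :
    #(colorNeighborFinset G c s j ∩ colorNeighborFinset G c t j) ≤ 1 := by
  by_contra! h
  obtain ⟨y, hy, z, hz, hyz⟩ := one_lt_card.mp h
  exact hc (hasMonoC4_of_mem_inter_colorNeighborFinset hst hyz hy hz)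

end ColorNeighbors

theorem card_filter_adj_le_add_card_inter_colorNeighborFinset {V : Type*} [Fintype V]
    [DecidableEq V] {G : SimpleGraph V} [DecidableRel G.Adj] (c : Sym2 V → Fin 2)
    (N : Finset V) (w : V) (i : Fin 2) :
    #(N.filter (G.Adj w)) ≤
      #(N ∩ colorNeighborFinset G c w i) + #(N ∩ colorNeighborFinset G c w (i + 1)) := by
  refine (card_le_card fun y hy => ?_).trans (card_union_le _ _)
  have other_color : ∀ a : Fin 2, a ≠ i → a = i + 1 := by revert i; decide
  simp only [mem_filter] at hy
  simp only [mem_union, mem_inter, mem_colorNeighborFinset, hy, true_and]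
  by_cases h : c s(w, y) = i
  · exact .inl h
  · exact .inr (other_color _ h)

theorem sum_choose_two_le_of_card_inter_le_one {ι α : Type*} [DecidableEq α] {W : Finset ι}
    {N : Finset α} (B : ι → Finset α) (hB : ∀ w ∈ W, B w ⊆ N)
    (hinter : ∀ w ∈ W, ∀ w' ∈ W, w ≠ w' → #(B w ∩ B w') ≤ 1) :
    ∑ w ∈ W, (#(B w)).choose 2 ≤ (#N).choose 2 := by
  have hdisj : (W : Set ι).PairwiseDisjoint fun w => (B w).powersetCard 2 := by
    intro w hw w' hw' hne
    refine disjoint_left.mpr fun e he he' => ?_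
    rw [mem_powersetCard] at he he'
    have := card_le_card (subset_inter he.1 he'.1)
    have := hinter w hw w' hw' hne
    omega
  calc ∑ w ∈ W, (#(B w)).choose 2
      = ∑ w ∈ W, #((B w).powersetCard 2) := by simp only [card_powersetCard]
    _ = #(W.biUnion fun w => (B w).powersetCard 2) := (card_biUnion hdisj).symm
    _ ≤ #(N.powersetCard 2) :=
        card_le_card <| biUnion_subset.mpr fun w hw => powersetCard_mono (hB w hw)
    _ = (#N).choose 2 := card_powersetCard 2 N

theorem seven_le_sum_choose_two_card_filter_adj :
    ∀ x : Fin 4 × Fin 2,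
      ∀ N ∈ (univ.filter ((completeMultipartite 4 2).Adj x)).powersetCard 4,
        7 ≤ ∑ w ∈ univ.erase x,
          (#(N.filter ((completeMultipartite 4 2).Adj w)) - 1).choose 2 := by
  decide +kernel

/-- If in a 2-coloring of the edges of `K_2^4` some vertex has degree at least 4 in one
of the colors, then the coloring contains a monochromatic `C₄`. -/
theorem hasMonoC4_of_colorDegree_ge_four (c : Sym2 (Fin 4 × Fin 2) → Fin 2)
    (x : Fin 4 × Fin 2) (i : Fin 2) (hx : 4 ≤ colorDegree c x i) :
    HasMonoC4 (completeMultipartite 4 2) c := by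
  set G := completeMultipartite 4 2
  by_contra hc
  obtain ⟨N, hNx, hN⟩ := exists_subset_card_eq (s := colorNeighborFinset G c x i) hx
  set B := fun w => N ∩ colorNeighborFinset G c w (i + 1)
  have hB : ∀ w ∈ univ.erase x, #(N.filter (G.Adj w)) - 1 ≤ #(B w) := fun w hw => by
    simp only [B]
    have hi := (card_le_card (inter_subset_inter_right hNx)).trans
      (card_inter_colorNeighborFinset_le_one hc (ne_of_mem_erase hw).symm i)
    have := card_filter_adj_le_add_card_inter_colorNeighborFinset (G := G) c N w i
    omega
  have hNadj : N ∈ (univ.filter (G.Adj x)).powersetCard 4 :=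
    mem_powersetCard.mpr
      ⟨fun y hy => by simpa using (mem_colorNeighborFinset.mp (hNx hy)).1, hN⟩
  have h7 : 7 ≤ (#N).choose 2 := calc
    7 ≤ ∑ w ∈ univ.erase x, (#(N.filter (G.Adj w)) - 1).choose 2 :=
        seven_le_sum_choose_two_card_filter_adj x N hNadj
    _ ≤ ∑ w ∈ univ.erase x, (#(B w)).choose 2 :=
        sum_le_sum fun w hw => Nat.choose_le_choose 2 (hB w hw)
    _ ≤ (#N).choose 2 := sum_choose_two_le_of_card_inter_le_one B (fun _ _ => inter_subset_left)
        fun w _ w' _ hne => (card_le_card (inter_subset_inter inter_subset_right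
          inter_subset_right)).trans (card_inter_colorNeighborFinset_le_one hc hne (i + 1))
  rw [hN] at h7
  exact absurd h7 (by decide)
end

section
/- Every coloring of the edges of the complete tripartite graph K_17^3 (three parts, each of size 17) with 5 colors contains a monochromatic cycle C_4; equivalently, r_3(C_4,5) ≤ 17. -/
/-!
Count monochromatic cherries `(b, j) – v – (b, j')`: a vertex `v` joined in one colour to two
distinct vertices of a part `b` other than its own. Two different centres for the same colour
and the same ordered pair would close a monochromatic `C₄`, so without one at most
`k n (n - 1)` cherries have their ends in a given part. On the other hand each of the
`(p - 1) n` vertices outside that part splits its `n` edges into it among `k` colours, and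
Cauchy–Schwarz forces at least `n² / k - n` cherries at it. For `p = 3`, `n = 17`, `k = 5` the
two bounds clash: `5² · 16 + 5 · 2 · 17 < 2 · 17²`.
-/

open Finset

theorem hasMonoC4_of_two_centres {V : Type*} {G : SimpleGraph V} {k : ℕ} {c : Sym2 V → Fin k}
    {v w x y : V} {i : Fin k} (hvw : v ≠ w) (hxy : x ≠ y)
    (hvx : G.Adj v x) (hvy : G.Adj v y) (hwx : G.Adj w x) (hwy : G.Adj w y)
    (hcvx : c s(v, x) = i) (hcvy : c s(v, y) = i) (hcwx : c s(w, x) = i)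
    (hcwy : c s(w, y) = i) : HasMonoC4 G c := by
  refine ⟨v, x, w, y, hvx.ne, hvw, hvy.ne, hwx.ne.symm, hxy, hwy.ne, hvx, hwx.symm, hwy,
    hvy.symm, ?_, ?_, ?_⟩ <;>
  simp only [Sym2.eq_swap (a := x), Sym2.eq_swap (a := y), hcvx, hcvy, hcwx, hcwy]

theorem sq_sum_card_le_card_mul_sum_card_offDiag {ι α : Type*} [Fintype ι] [DecidableEq α]
    (s : ι → Finset α) :
    (∑ i, #(s i)) ^ 2 ≤ Fintype.card ι * (∑ i, #(s i).offDiag + ∑ i, #(s i)) := by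
  have hsq (i : ι) : #(s i).offDiag + #(s i) = #(s i) ^ 2 := by
    rw [offDiag_card, sq, Nat.sub_add_cancel (Nat.le_mul_self _)]
  rw [← sum_add_distrib, sum_congr rfl fun i _ => hsq i]
  exact sq_sum_le_card_mul_sum_sq

namespace completeMultipartite

variable {p n k : ℕ} (c : Sym2 (Fin p × Fin n) → Fin k)

def colorNbhd (v : Fin p × Fin n) (b : Fin p) (i : Fin k) : Finset (Fin n) :=
  {j | (completeMultipartite p n).Adj v (b, j) ∧ c s(v, (b, j)) = i}

theorem sum_card_colorNbhd {v : Fin p × Fin n} {b : Fin p} (hvb : v.1 ≠ b) :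
    ∑ i, #(colorNbhd c v b i) = n := by
  have hfib := card_eq_sum_card_fiberwise (s := (univ : Finset (Fin n))) (t := univ)
    (f := fun j => c s(v, (b, j))) fun _ _ => mem_coe.2 (mem_univ _)
  simp only [card_univ, Fintype.card_fin] at hfib
  refine Eq.trans (sum_congr rfl fun i _ => congrArg card (filter_congr fun j _ => ?_)) hfib.symm
  exact ⟨fun h => h.2, fun h => ⟨hvb, h⟩⟩

theorem sum_card_offDiag_colorNbhd_le (hc : ¬ HasMonoC4 (completeMultipartite p n) c)
    (b : Fin p) : ∑ v, ∑ i, #(colorNbhd c v b i).offDiag ≤ k * (n * n - n) := by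
  have hdisj (i : Fin k) :
      ((univ : Finset (Fin p × Fin n)) : Set _).PairwiseDisjoint
        fun v => (colorNbhd c v b i).offDiag := by
    intro v _ w _ hvw
    refine disjoint_left.2 fun ⟨j, j'⟩ hv hw => hc ?_
    simp only [mem_offDiag, colorNbhd, mem_filter, mem_univ, true_and] at hv hw
    exact hasMonoC4_of_two_centres hvw (fun h => hv.2.2 (Prod.ext_iff.1 h).2) hv.1.1 hv.2.1.1
      hw.1.1 hw.2.1.1 hv.1.2 hv.2.1.2 hw.1.2 hw.2.1.2
  calc ∑ v, ∑ i, #(colorNbhd c v b i).offDiag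
      = ∑ i, #(univ.biUnion fun v => (colorNbhd c v b i).offDiag) := by
        rw [sum_comm]
        exact sum_congr rfl fun i _ => (card_biUnion (hdisj i)).symm
    _ ≤ ∑ _i : Fin k, #(univ : Finset (Fin n)).offDiag :=
        sum_le_sum fun i _ => card_le_card <| biUnion_subset.2 fun v _ =>
          offDiag_mono (subset_univ _)
    _ = k * (n * n - n) := by simp [offDiag_card]

theorem le_mul_sum_card_offDiag_colorNbhd (b : Fin p) :
    (p - 1) * n * n ^ 2 ≤ k * (∑ v, ∑ i, #(colorNbhd c v b i).offDiag + (p - 1) * n * n) := by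
  have hcard : #(univ.erase b ×ˢ (univ : Finset (Fin n))) = (p - 1) * n := by simp
  have hvertex (v : Fin p × Fin n) (hv : v ∈ univ.erase b ×ˢ univ) :
      n ^ 2 ≤ k * (∑ i, #(colorNbhd c v b i).offDiag + n) := by
    have hCS := sq_sum_card_le_card_mul_sum_card_offDiag (colorNbhd c v b)
    rwa [sum_card_colorNbhd c (ne_of_mem_erase (mem_product.1 hv).1), Fintype.card_fin] at hCS
  calc (p - 1) * n * n ^ 2 = ∑ _v ∈ univ.erase b ×ˢ univ, n ^ 2 := by
        rw [sum_const, hcard, smul_eq_mul]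
    _ ≤ ∑ v ∈ univ.erase b ×ˢ univ, k * (∑ i, #(colorNbhd c v b i).offDiag + n) :=
        sum_le_sum hvertex
    _ = k * (∑ v ∈ univ.erase b ×ˢ univ, ∑ i, #(colorNbhd c v b i).offDiag
          + (p - 1) * n * n) := by
        rw [← mul_sum, sum_add_distrib, sum_const, hcard, smul_eq_mul]
    _ ≤ k * (∑ v, ∑ i, #(colorNbhd c v b i).offDiag + (p - 1) * n * n) := by
        gcongr
        exact subset_univ _

theorem hasMonoC4_of_lt (hpnk : k ^ 2 * (n - 1) + k * (p - 1) * n < (p - 1) * n ^ 2) :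
    HasMonoC4 (completeMultipartite p n) c := by
  by_contra hc
  have hp : 0 < p := Nat.pos_of_ne_zero fun h => by simp [h] at hpnk
  have hn : 0 < n := Nat.pos_of_ne_zero fun h => by simp [h] at hpnk
  set N := ∑ v, ∑ i, #(colorNbhd c v ⟨0, hp⟩ i).offDiag
  have hupper : N ≤ k * (n * n - n) := sum_card_offDiag_colorNbhd_le c hc _
  have hlower : (p - 1) * n * n ^ 2 ≤ k * (N + (p - 1) * n * n) :=
    le_mul_sum_card_offDiag_colorNbhd c _
  have hsq : n * n - n = n * (n - 1) := (Nat.mul_sub_one n n).symm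
  have hcount : n * ((p - 1) * n ^ 2) ≤ n * (k ^ 2 * (n - 1) + k * (p - 1) * n) :=
    calc n * ((p - 1) * n ^ 2) = (p - 1) * n * n ^ 2 := by ring
      _ ≤ k * (N + (p - 1) * n * n) := hlower
      _ ≤ k * (k * (n * n - n) + (p - 1) * n * n) := by gcongr
      _ = n * (k ^ 2 * (n - 1) + k * (p - 1) * n) := by rw [hsq]; ring
  exact absurd (Nat.le_of_mul_le_mul_left hcount hn) (not_le.2 hpnk)

end completeMultipartite

/-- Every 5-coloring of the edges of `K_17^3` contains a monochromatic `C₄`;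
equivalently, `r₃(C₄, 5) ≤ 17`. -/
theorem tripartiteRamsey_five_colors_le :
    (∀ c : Sym2 (Fin 3 × Fin 17) → Fin 5, HasMonoC4 (completeMultipartite 3 17) c) ∧
      multipartiteRamsey 3 5 ≤ 17 := by
  have hmono (c : Sym2 (Fin 3 × Fin 17) → Fin 5) := completeMultipartite.hasMonoC4_of_lt c
    (by norm_num)
  exact ⟨hmono, Nat.sInf_le ⟨by norm_num, hmono⟩⟩
end
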